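/- Let α ∈ ℕ and β ∈ (-1,0). Then for every x ∈ [0,1), the Cauchy–Schwarz type inequality (∑_{j=0}^{α+1} j·(-x)^j/(j+β)·C(α+1,j))² ≤ (∑_{j=0}^{α+1} j²·(-x)^j/(j+β)·C(α+1,j)) · (∑_{j=0}^{α+1} (-x)^j/(j+β)·C(α+1,j)) holds, assuming β ∈ 𝒥_α (i.e., Q_{α,β} has no zero in the unit disk, equivalently H_{α,β}(t) > 0 for t ∈ [0,1)). -/

import Mathlib

/-- For `α ∈ ℕ`, the finite sum `H_{α,β}(t) = β ∑_{n=0}^{α+1} (-t)^n/(n+β) C(α+1,n)`. -/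
noncomputable def Hfin (α : ℕ) (β t : ℝ) : ℝ :=
  β * ∑ n ∈ Finset.range (α + 2), (-t) ^ n / (n + β) * (Nat.choose (α + 1) n)

/-!
Put `w j = C(α+1,j) (-x)^j` and `S_k = ∑ j^k w j / (j+β)`. Since `j/(j+β) = 1 - β/(j+β)`,
`S₁` and `S₂` are determined by `S₀` and the binomial sums `∑ w j = (1-x)^(α+1)` and
`∑ j w j = -(α+1) x (1-x)^α`, and `S₂ S₀ - S₁² = (∑ j w j) S₀ - (1-x)^(α+1) S₁`.
Moreover `S₁ = -(α+1) x ∫₀¹ u^β (1-xu)^α du ≤ 0`, so `β S₀ = (1-x)^(α+1) - S₁ > 0`, i.e. `S₀ < 0`,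
and both terms on the right are nonnegative.
-/

open Finset

section GramIdentity

variable {ι : Type*} (s : Finset ι) (a w : ι → ℝ) {β : ℝ}

theorem sum_mul_div_add_eq_sub (h : ∀ i ∈ s, a i + β ≠ 0) :
    ∑ i ∈ s, a i * w i / (a i + β) = ∑ i ∈ s, w i - β * ∑ i ∈ s, w i / (a i + β) := by
  rw [mul_sum, ← sum_sub_distrib]
  refine sum_congr rfl fun i hi => ?_
  field_simp [h i hi]
  ring

theorem sum_sq_mul_div_mul_sum_div_sub_sq (h : ∀ i ∈ s, a i + β ≠ 0) :
    (∑ i ∈ s, a i ^ 2 * w i / (a i + β)) * (∑ i ∈ s, w i / (a i + β)) -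
        (∑ i ∈ s, a i * w i / (a i + β)) ^ 2 =
      (∑ i ∈ s, a i * w i) * (∑ i ∈ s, w i / (a i + β)) -
        (∑ i ∈ s, w i) * ∑ i ∈ s, a i * w i / (a i + β) := by
  have h₁ := sum_mul_div_add_eq_sub s a w h
  have h₂ := sum_mul_div_add_eq_sub s a (fun i => a i * w i) h
  simp only [← mul_assoc, ← sq] at h₂
  linear_combination (∑ i ∈ s, w i / (a i + β)) * h₂ - (∑ i ∈ s, a i * w i / (a i + β)) * h₁

end GramIdentity

section BinomialSums

variable {R : Type*} [CommSemiring R]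

theorem sum_range_pow_mul_choose (m : ℕ) (y : R) :
    ∑ k ∈ range (m + 1), y ^ k * m.choose k = (1 + y) ^ m := by
  simp [add_comm (1 : R), add_pow]

theorem sum_range_mul_mul_choose_succ (m : ℕ) (f : ℕ → R) :
    ∑ j ∈ range (m + 2), (j : R) * (f j * (m + 1).choose j) =
      (m + 1) * ∑ k ∈ range (m + 1), f (k + 1) * m.choose k := by
  rw [sum_range_succ', mul_sum]
  simp only [Nat.cast_zero, zero_mul, add_zero]
  refine sum_congr rfl fun k _ => ?_
  have := congrArg (Nat.cast : ℕ → R) (Nat.add_one_mul_choose_eq m k)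
  push_cast at this ⊢
  rw [mul_left_comm (m + 1 : R), this]
  ring

theorem sum_range_mul_pow_mul_choose (m : ℕ) (y : R) :
    ∑ j ∈ range (m + 2), (j : R) * (y ^ j * (m + 1).choose j) = (m + 1) * y * (1 + y) ^ m := by
  simp only [sum_range_mul_mul_choose_succ, pow_succ', mul_assoc, ← mul_sum,
    sum_range_pow_mul_choose]

end BinomialSums

theorem sum_range_mul_pow_mul_choose_div (m : ℕ) (y β : ℝ) :
    ∑ j ∈ range (m + 2), (j : ℝ) * (y ^ j * (m + 1).choose j) / (j + β) =
      (m + 1) * y * ∑ k ∈ range (m + 1), y ^ k / (k + β + 1) * m.choose k := by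
  calc _ = ∑ j ∈ range (m + 2), (j : ℝ) * (y ^ j / (j + β) * (m + 1).choose j) :=
        sum_congr rfl fun j _ => by ring
    _ = _ := by
      rw [sum_range_mul_mul_choose_succ, mul_assoc, mul_sum _ _ y]
      push_cast
      exact congrArg _ (sum_congr rfl fun k _ => by ring)

theorem integral_rpow_mul_one_add_mul_pow (m : ℕ) {γ : ℝ} (hγ : -1 < γ) (y : ℝ) :
    ∫ u in (0 : ℝ)..1, u ^ γ * (1 + y * u) ^ m =
      ∑ k ∈ range (m + 1), y ^ k / (k + γ + 1) * m.choose k := by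
  have hk : ∀ k : ℕ, -1 < (k + γ : ℝ) := fun k => by linarith [k.cast_nonneg (α := ℝ)]
  calc _ = ∫ u in (0 : ℝ)..1, ∑ k ∈ range (m + 1), y ^ k * m.choose k * u ^ (k + γ : ℝ) := by
        refine intervalIntegral.integral_congr_ae (.of_forall fun u hu => ?_)
        rw [Set.uIoc_of_le zero_le_one] at hu
        simp only [Real.rpow_add hu.1, Real.rpow_natCast, ← sum_range_pow_mul_choose, mul_sum]
        exact sum_congr rfl fun k _ => by ring
    _ = _ := by
      rw [intervalIntegral.integral_finsetSum fun k _ =>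
        (intervalIntegral.intervalIntegrable_rpow' (hk k)).const_mul _]
      refine sum_congr rfl fun k _ => ?_
      rw [intervalIntegral.integral_const_mul, integral_rpow (.inl (hk k)), Real.one_rpow,
        Real.zero_rpow (by linarith [hk k])]
      ring

theorem sum_range_pow_div_mul_choose_nonneg (m : ℕ) {γ y : ℝ} (hγ : -1 < γ) (hy : -1 ≤ y) :
    0 ≤ ∑ k ∈ range (m + 1), y ^ k / (k + γ + 1) * m.choose k := by
  rw [← integral_rpow_mul_one_add_mul_pow m hγ]
  refine intervalIntegral.integral_nonneg zero_le_one fun u hu => ?_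
  have : 0 ≤ 1 + y * u := by nlinarith [hu.1, hu.2]
  exact mul_nonneg (Real.rpow_nonneg hu.1 γ) (pow_nonneg this m)

theorem natCast_add_ne_zero (n : ℕ) {β : ℝ} (hβ : -1 < β) (hβ0 : β < 0) : (n : ℝ) + β ≠ 0 := by
  rcases n.eq_zero_or_pos with rfl | hn
  · simpa using hβ0.ne
  · have : (1 : ℝ) ≤ n := by exact_mod_cast hn
    linarith

theorem cauchy_schwarz_type_general (α : ℕ) (β : ℝ) (hβ : -1 < β) (hβ0 : β < 0)
    (x : ℝ) (hx : x ∈ Set.Ico (0 : ℝ) 1) :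
    (∑ j ∈ Finset.range (α + 2), (j : ℝ) * (-x) ^ j / (j + β) * (Nat.choose (α + 1) j)) ^ 2 ≤
      (∑ j ∈ Finset.range (α + 2), (j : ℝ) ^ 2 * (-x) ^ j / (j + β) * (Nat.choose (α + 1) j)) *
        (∑ j ∈ Finset.range (α + 2), (-x) ^ j / (j + β) * (Nat.choose (α + 1) j)) := by
  obtain ⟨hx0, hx1⟩ := hx
  have hden : ∀ j ∈ range (α + 2), (j : ℝ) + β ≠ 0 := fun j _ => natCast_add_ne_zero j hβ hβ0
  set w : ℕ → ℝ := fun j => (-x) ^ j * (α + 1).choose j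
  set S₀ := ∑ j ∈ range (α + 2), w j / (j + β)
  set Q := ∑ k ∈ range (α + 1), (-x) ^ k / (k + β + 1) * α.choose k
  have hQ : 0 ≤ Q := sum_range_pow_div_mul_choose_nonneg α hβ (by linarith)
  have hS₁ : ∑ j ∈ range (α + 2), (j : ℝ) * w j / (j + β) = (α + 1) * -x * Q :=
    sum_range_mul_pow_mul_choose_div α (-x) β
  have hA₀ : ∑ j ∈ range (α + 2), w j = (1 + -x) ^ (α + 1) := sum_range_pow_mul_choose _ _
  have hA₁ : ∑ j ∈ range (α + 2), (j : ℝ) * w j = (α + 1) * -x * (1 + -x) ^ α :=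
    sum_range_mul_pow_mul_choose α (-x)
  have h1x : 0 < 1 + -x := by linarith
  have hc : 0 ≤ ((α : ℝ) + 1) * x := by positivity
  have hS₀ : S₀ < 0 := by
    have hβS₀ : β * S₀ = (1 + -x) ^ (α + 1) + (α + 1) * x * Q := by
      linear_combination sum_mul_div_add_eq_sub _ _ w hden - hS₁ + hA₀
    exact neg_of_mul_pos_right (hβS₀ ▸ add_pos_of_pos_of_nonneg (pow_pos h1x _) (mul_nonneg hc hQ))
      hβ0.le
  simp only [div_mul_eq_mul_div, mul_assoc]
  rw [← sub_nonneg, sum_sq_mul_div_mul_sum_div_sub_sq _ _ w hden, hA₀, hA₁, hS₁]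
  linear_combination mul_nonneg (mul_nonneg hc (pow_nonneg h1x.le α)) (neg_nonneg.2 hS₀.le) +
    mul_nonneg (pow_nonneg h1x.le (α + 1)) (mul_nonneg hc hQ)

theorem cauchy_schwarz_type (α : ℕ) (β : ℝ) (hβ : -1 < β) (hβ0 : β < 0)
    (hH : ∀ t ∈ Set.Ico (0 : ℝ) 1, 0 < Hfin α β t)
    (x : ℝ) (hx : x ∈ Set.Ico (0 : ℝ) 1) :
    (∑ j ∈ Finset.range (α + 2), (j : ℝ) * (-x) ^ j / (j + β) * (Nat.choose (α + 1) j)) ^ 2 ≤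
      (∑ j ∈ Finset.range (α + 2), (j : ℝ) ^ 2 * (-x) ^ j / (j + β) * (Nat.choose (α + 1) j)) *
        (∑ j ∈ Finset.range (α + 2), (-x) ^ j / (j + β) * (Nat.choose (α + 1) j)) :=
  cauchy_schwarz_type_general α β hβ hβ0 x hx
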